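/- Let p be a prime, n ≥ 1, and C a subset of ((ℤ/pℤ) × (ℤ/pℤ))ⁿ. Let ℓ and ℓ' be positive squarefree integers with ℓ ≡ 3 (mod 4), ℓ' ≡ 3 (mod 4), p ∤ ℓ, p ∤ ℓ', ℓ < ℓ', and such that ℓ and ℓ' are admissible for the same ring (i.e., for odd p the Legendre symbols (−ℓ/p) and (−ℓ'/p) are equal, and for p = 2 one has ℓ ≡ ℓ' (mod 8)). Put d = (ℓ+1)/4 and d' = (ℓ'+1)/4. Then for every natural number k with k < (ℓ+1)/4, the coefficient of q^k in θ_{Λ,d}(C) equals the coefficient of q^k in θ_{Λ,d'}(C), where θ_{Λ,e}(C) ∈ ℤ[[q]] is the formal power series whose coefficient of q^k is the number of pairs (x,y) ∈ ℤⁿ × ℤⁿ with ((x_i mod p, y_i mod p))_i ∈ C and ∑_{i=1}^n Q_e(x_i,y_i) = k. -/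

import Mathlib

noncomputable section

/-- The positive definite quadratic form `Q_e(x,y) = x² + xy + e y²`. -/
def Qform (e : ℕ) (x y : ℤ) : ℤ := x ^ 2 + x * y + (e : ℤ) * y ^ 2

/-- The theta series of the Construction A lattice of a code
`C ⊆ ((ℤ/p) × (ℤ/p))ⁿ` for the form `Q_e`: the coefficient of `q^k` counts pairs of
integer vectors `(x,y)` whose componentwise reduction mod `p` lies in `C` and with
`∑ᵢ Q_e(xᵢ,yᵢ) = k`. -/
def thetaLambda (p e n : ℕ) (C : Finset (Fin n → ZMod p × ZMod p)) : PowerSeries ℤ :=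
  PowerSeries.mk fun k =>
    (Set.ncard {xy : (Fin n → ℤ) × (Fin n → ℤ) |
      (fun i => (((xy.1 i : ℤ) : ZMod p), ((xy.2 i : ℤ) : ZMod p))) ∈ C ∧
      (∑ i, Qform e (xy.1 i) (xy.2 i)) = (k : ℤ)} : ℤ)

/-!
Since `4 Q_e(x, y) = (2x + y)² + (4e - 1) y²`, the form is nonnegative and takes values `≥ e`
as soon as `y ≠ 0`. Hence every vector counted by a coefficient of index `k < e` has `y = 0`,
and on those vectors `Q_e(x, 0) = x²` no longer depends on `e`. Both `d` and `d' ≥ d`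
exceed `k`, so the two coefficients count the same set.
-/

lemma Qform_zero_right (e : ℕ) (x : ℤ) : Qform e x 0 = x ^ 2 := by
  simp [Qform]

lemma Qform_nonneg {e : ℕ} (he : 0 < e) (x y : ℤ) : 0 ≤ Qform e x y := by
  have he' : (1 : ℤ) ≤ e := by exact_mod_cast he
  unfold Qform
  nlinarith [sq_nonneg (2 * x + y), sq_nonneg y]

lemma le_Qform_of_ne_zero {e : ℕ} (he : 0 < e) (x : ℤ) {y : ℤ} (hy : y ≠ 0) :
    (e : ℤ) ≤ Qform e x y := by
  have he' : (1 : ℤ) ≤ e := by exact_mod_cast he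
  have hy2 : 1 ≤ y ^ 2 := by
    have := sq_pos_of_ne_zero hy
    omega
  unfold Qform
  nlinarith [sq_nonneg (2 * x + y)]

lemma eq_zero_of_sum_Qform_lt {ι : Type*} [Fintype ι] {e : ℕ} (he : 0 < e) (x y : ι → ℤ)
    (h : ∑ i, Qform e (x i) (y i) < e) : y = 0 := by
  funext i
  by_contra hy
  have h_le_sum : Qform e (x i) (y i) ≤ ∑ j, Qform e (x j) (y j) :=
    Finset.single_le_sum (fun j _ => Qform_nonneg he (x j) (y j)) (Finset.mem_univ i)
  have := le_Qform_of_ne_zero he (x i) hy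
  omega

lemma sum_Qform_eq_iff_of_lt {ι : Type*} [Fintype ι] {e k : ℕ} (hk : k < e) (x y : ι → ℤ) :
    ∑ i, Qform e (x i) (y i) = k ↔ y = 0 ∧ ∑ i, x i ^ 2 = k := by
  constructor
  · intro h
    have h_lt : ∑ i, Qform e (x i) (y i) < e := by rw [h]; exact_mod_cast hk
    obtain rfl : y = 0 := eq_zero_of_sum_Qform_lt (by omega) x y h_lt
    simpa [Qform_zero_right] using h
  · rintro ⟨rfl, h⟩
    simpa [Qform_zero_right] using h

lemma coeff_thetaLambda_of_lt (p n : ℕ) (C : Finset (Fin n → ZMod p × ZMod p)) {e k : ℕ}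
    (hk : k < e) :
    PowerSeries.coeff k (thetaLambda p e n C) =
      (Set.ncard {xy : (Fin n → ℤ) × (Fin n → ℤ) |
        (fun i => (((xy.1 i : ℤ) : ZMod p), ((xy.2 i : ℤ) : ZMod p))) ∈ C ∧
        xy.2 = 0 ∧ ∑ i, xy.1 i ^ 2 = (k : ℤ)} : ℤ) := by
  simp only [thetaLambda, PowerSeries.coeff_mk, sum_Qform_eq_iff_of_lt hk]

theorem stmt6_general (p n : ℕ)
    (C : Finset (Fin n → ZMod p × ZMod p))
    (ℓ ℓ' : ℕ) (hlt : ℓ < ℓ')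
    (d d' : ℕ) (hd : d = (ℓ + 1) / 4) (hd' : d' = (ℓ' + 1) / 4)
    (k : ℕ) (hk : k < (ℓ + 1) / 4) :
    PowerSeries.coeff (R := ℤ) k (thetaLambda p d n C) =
      PowerSeries.coeff (R := ℤ) k (thetaLambda p d' n C) := by
  have hkd : k < d := hd ▸ hk
  have hdd' : d ≤ d' := hd ▸ hd' ▸ Nat.div_le_div_right (by omega)
  rw [coeff_thetaLambda_of_lt p n C hkd, coeff_thetaLambda_of_lt p n C (hkd.trans_le hdd')]

theorem stmt6 (p n : ℕ) (hp : p.Prime) (hn : 1 ≤ n)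
    (C : Finset (Fin n → ZMod p × ZMod p))
    (ℓ ℓ' : ℕ) (hℓpos : 0 < ℓ) (hℓ'pos : 0 < ℓ')
    (hsf : Squarefree ℓ) (hsf' : Squarefree ℓ')
    (hmod : ℓ % 4 = 3) (hmod' : ℓ' % 4 = 3)
    (hpl : ¬ p ∣ ℓ) (hpl' : ¬ p ∣ ℓ') (hlt : ℓ < ℓ')
    (hadm_odd : Odd p → (IsSquare ((-(ℓ : ℤ) : ℤ) : ZMod p) ↔ IsSquare ((-(ℓ' : ℤ) : ℤ) : ZMod p)))
    (hadm_two : p = 2 → ℓ % 8 = ℓ' % 8)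
    (d d' : ℕ) (hd : d = (ℓ + 1) / 4) (hd' : d' = (ℓ' + 1) / 4)
    (k : ℕ) (hk : k < (ℓ + 1) / 4) :
    PowerSeries.coeff (R := ℤ) k (thetaLambda p d n C) =
      PowerSeries.coeff (R := ℤ) k (thetaLambda p d' n C) :=
  stmt6_general p n C ℓ ℓ' hlt d d' hd hd' k hk
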